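/- arXiv:1804.08067 — 3 statements merged into one kernel-verified Lean document; each statement's English description precedes it below -/
import Mathlib

section
/- Let S = {f₁, ..., fₙ} be a finite set of positive real numbers (a scale). Suppose that for every pair x, y ∈ S with x > y, there exist z ∈ S and an integer t such that x - y = 2^t · z (S is a 'complete difference tone scale'). Then every ratio fᵢ/fⱼ of elements of S is a rational number. -/
/-- A complete difference tone scale consists solely of rational intervals. -/
theorem complete_difference_tone_scale_rational
    (S : Finset ℝ) (hpos : ∀ x ∈ S, 0 < x)
    (hcdts : ∀ x ∈ S, ∀ y ∈ S, y < x → ∃ z ∈ S, ∃ t : ℤ, x - y = 2 ^ t * z) :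
    ∀ a ∈ S, ∀ b ∈ S, ∃ q : ℚ, a = q * b := by
  intro a ha b hb
  by_contra hq
  push_neg at hq
  have hmem : a ∉ Submodule.span ℚ ({b} : Set ℝ) := by
    intro h
    rw [Submodule.mem_span_singleton] at h
    obtain ⟨q, hqb⟩ := h
    exact hq q (by rw [← hqb, Rat.smul_def])
  obtain ⟨L, hLa, hLmap⟩ :=
    Submodule.exists_dual_map_eq_bot_of_notMem hmem inferInstance
  have hLb : L b = 0 := by
    have : L b ∈ Submodule.map L (Submodule.span ℚ ({b} : Set ℝ)) :=
      Submodule.mem_map_of_mem (Submodule.mem_span_singleton_self b)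
    rw [hLmap] at this
    simpa using this
  set g : ℝ → ℝ := fun s => (L s : ℝ) / s with hg
  have hgval : ∀ s ∈ S, (L s : ℝ) = g s * s := by
    intro s hs
    have := (hpos s hs).ne'
    rw [hg]; field_simp
  have key : ∀ x ∈ S, ∀ y ∈ S, y < x →
      ∃ z ∈ S, g z * (x - y) = (L x : ℝ) - (L y : ℝ) := by
    intro x hx y hy hyx
    obtain ⟨z, hz, t, ht⟩ := hcdts x hx y hy hyx
    refine ⟨z, hz, ?_⟩
    have hz0 : (0:ℝ) < z := hpos z hz
    have hsmul : x - y = ((2:ℚ) ^ t : ℚ) • z := by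
      rw [Rat.smul_def]; push_cast; exact ht
    have hLz : L x - L y = (2:ℚ) ^ t * L z := by
      have := congrArg L hsmul
      simpa [map_sub, LinearMap.map_smul, smul_eq_mul] using this
    have h1 : g z * (x - y) = (L z : ℝ) / z * ((2:ℝ) ^ t * z) := by rw [hg, ht]
    have h1' : (L z : ℝ) / z * ((2:ℝ) ^ t * z) = (2:ℝ) ^ t * (L z : ℝ) := by
      field_simp
    rw [h1, h1']
    have h2 : ((L x : ℚ) : ℝ) - ((L y : ℚ) : ℝ) = ((2:ℚ)^t : ℝ) * ((L z : ℚ) : ℝ) := by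
      exact_mod_cast congrArg (fun q : ℚ => (q : ℝ)) hLz
    push_cast at h2
    linarith
  have hSne : S.Nonempty := ⟨a, ha⟩
  obtain ⟨x, hx, hxmax⟩ := S.exists_max_image g hSne
  obtain ⟨w, hw, hwmin⟩ := S.exists_min_image g hSne
  set s₀ := S.min' hSne with hs0def
  have hs0 : s₀ ∈ S := S.min'_mem hSne
  have hs0le : ∀ s ∈ S, s₀ ≤ s := fun s hs => S.min'_le s hs
  -- at the maximizer: no smaller element has strictly smaller g
  have stepmax : ∀ v ∈ S, v < x → ¬ (g v < g x) := by
    intro v hv hvx hlt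
    obtain ⟨z, hz, hzeq⟩ := key x hx v hv hvx
    have hv0 := hpos v hv
    have hgz : g z * (x - v) > g x * (x - v) := by
      rw [hzeq, hgval x hx, hgval v hv]; nlinarith
    have : g x < g z := lt_of_mul_lt_mul_right hgz (by linarith)
    exact absurd (hxmax z hz) (by linarith)
  have stepmin : ∀ v ∈ S, v < w → ¬ (g w < g v) := by
    intro v hv hvw hlt
    obtain ⟨z, hz, hzeq⟩ := key w hw v hv hvw
    have hv0 := hpos v hv
    have hgz : g z * (w - v) < g w * (w - v) := by
      rw [hzeq, hgval w hw, hgval v hv]; nlinarith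
    have : g z < g w := lt_of_mul_lt_mul_right hgz (by linarith)
    exact absurd (hwmin z hz) (by linarith)
  have hgx0 : g s₀ = g x := by
    rcases eq_or_lt_of_le (hs0le x hx) with h | h
    · rw [h]
    · exact le_antisymm (hxmax s₀ hs0) (not_lt.mp (stepmax s₀ hs0 h))
  have hgw0 : g s₀ = g w := by
    rcases eq_or_lt_of_le (hs0le w hw) with h | h
    · rw [h]
    · exact le_antisymm (not_lt.mp (stepmin s₀ hs0 h)) (hwmin s₀ hs0)
  have hga : g a ≠ 0 := by
    have ha0 := (hpos a ha).ne'
    rw [hg]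
    simp only [div_ne_zero_iff]
    exact ⟨by exact_mod_cast hLa, ha0⟩
  have hgb : g b = 0 := by rw [hg]; simp [hLb]
  have h1 : g w ≤ g b := hwmin b hb
  have h2 : g a ≤ g x := hxmax a ha
  have h3 : g w ≤ g a := hwmin a ha
  have h4 : g b ≤ g x := hxmax b hb
  have : g w = g x := hgw0 ▸ hgx0
  rcases lt_trichotomy (g a) 0 with h | h | h
  · linarith
  · exact hga h
  · linarith
end

section
/- Let S = {f₁, ..., fₙ} be a complete difference tone scale. Then every element fᵢ of S is a rational multiple of the largest element fₙ, i.e., S ⊆ fₙ·ℚ. -/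
/-!
If some `a ∈ S` were not a rational multiple of `b ∈ S`, a `ℚ`-linear functional `φ` on `ℝ`
would vanish at `b` but not at `a`, so the slope `φ x / x` would not be constant on `S`.
Take `x, y ∈ S` with extremal slopes. Since `φ` commutes with multiplication by `2 ^ t`, the
element `z` with `x - y = 2 ^ t z` has slope `(φ x - φ y) / (x - y)`, which lies strictly
beyond the slope of the larger of `x, y`, contradicting extremality.
-/

open Finset

lemma div_lt_sub_div_sub {a b x y : ℝ} (hy : 0 < y) (hyx : y < x) (h : b / y < a / x) :
    a / x < (a - b) / (x - y) := by
  have hx : 0 < x := hy.trans hyx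
  rw [div_lt_div_iff₀ hy hx] at h
  rw [div_lt_div_iff₀ hx (sub_pos.mpr hyx)]
  linarith

namespace LinearMap

variable (φ : ℝ →ₗ[ℚ] ℝ)

lemma sub_div_sub_eq_div_of_sub_eq_rat_mul {x y z : ℝ} {q : ℚ} (hq : q ≠ 0)
    (h : x - y = q * z) : (φ x - φ y) / (x - y) = φ z / z := by
  have hφ : φ x - φ y = q * φ z := by
    rw [← map_sub, h, ← Rat.smul_def, map_smul, Rat.smul_def]
  rw [hφ, h, mul_div_mul_left _ _ (Rat.cast_ne_zero.mpr hq)]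

variable {S : Finset ℝ} (hpos : ∀ x ∈ S, 0 < x)
  (hS : ∀ x ∈ S, ∀ y ∈ S, y < x → ∃ z ∈ S, ∃ q : ℚ, x - y = q * z)
include hpos hS

lemma exists_div_lt_div_of_sub_eq_rat_mul {x y : ℝ} (hx : x ∈ S) (hy : y ∈ S) (hyx : y < x)
    (hslope : φ y / y < φ x / x) : ∃ z ∈ S, φ x / x < φ z / z := by
  obtain ⟨z, hz, q, hxyz⟩ := hS x hx y hy hyx
  have hq : q ≠ 0 := by
    rintro rfl
    simp [sub_eq_zero, hyx.ne'] at hxyz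
  refine ⟨z, hz, ?_⟩
  rw [← φ.sub_div_sub_eq_div_of_sub_eq_rat_mul hq hxyz]
  exact div_lt_sub_div_sub (hpos y hy) hyx hslope

lemma div_eq_div_of_sub_eq_rat_mul {a b : ℝ} (ha : a ∈ S) (hb : b ∈ S) :
    φ a / a = φ b / b := by
  set r : ℝ → ℝ := fun x => φ x / x
  obtain ⟨s, hs, hs_max⟩ := S.exists_max_image r ⟨a, ha⟩
  obtain ⟨u, hu, hu_min⟩ := S.exists_min_image r ⟨a, ha⟩
  suffices r s ≤ r u from
    le_antisymm ((hs_max a ha).trans (this.trans (hu_min b hb)))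
      ((hs_max b hb).trans (this.trans (hu_min a ha)))
  by_contra! hus
  rcases lt_trichotomy u s with hlt | rfl | hgt
  · obtain ⟨z, hz, hsz⟩ := φ.exists_div_lt_div_of_sub_eq_rat_mul hpos hS hs hu hlt hus
    exact (hs_max z hz).not_gt hsz
  · exact hus.false
  · -- the same step for `-φ` moves the slope below the minimum
    obtain ⟨z, hz, hzu⟩ := (-φ).exists_div_lt_div_of_sub_eq_rat_mul hpos hS hu hs hgt
      (by simpa only [neg_apply, neg_div, neg_lt_neg_iff] using hus)
    simp only [neg_apply, neg_div, neg_lt_neg_iff] at hzu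
    exact (hu_min z hz).not_gt hzu

end LinearMap

theorem exists_rat_eq_mul_of_sub_eq_rat_mul {S : Finset ℝ} (hpos : ∀ x ∈ S, 0 < x)
    (hS : ∀ x ∈ S, ∀ y ∈ S, y < x → ∃ z ∈ S, ∃ q : ℚ, x - y = q * z) {a b : ℝ}
    (ha : a ∈ S) (hb : b ∈ S) : ∃ q : ℚ, a = q * b := by
  by_contra! hab
  have ha_span : a ∉ Submodule.span ℚ {b} := by
    rw [Submodule.mem_span_singleton]
    rintro ⟨q, rfl⟩
    exact hab q (Rat.smul_def q b)
  obtain ⟨f, hfa, hfb⟩ := Submodule.exists_dual_map_eq_bot_of_notMem ha_span inferInstance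
  have hfb : f b = 0 := by
    simpa [hfb] using Submodule.mem_map_of_mem (f := f) (Submodule.mem_span_singleton_self b)
  let φ : ℝ →ₗ[ℚ] ℝ := (Algebra.linearMap ℚ ℝ).comp f
  have hslope := φ.div_eq_div_of_sub_eq_rat_mul hpos hS ha hb
  simp only [φ, LinearMap.comp_apply, Algebra.linearMap_apply, hfb, map_zero, zero_div,
    div_eq_zero_iff, (hpos a ha).ne', or_false, eq_ratCast, Rat.cast_eq_zero] at hslope
  exact hfa hslope

/-- Every element of a complete difference tone scale is a rational multiple
of the largest element. -/
theorem complete_difference_tone_scale_subset_max_rat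
    (S : Finset ℝ) (hne : S.Nonempty) (hpos : ∀ x ∈ S, 0 < x)
    (hcdts : ∀ x ∈ S, ∀ y ∈ S, y < x → ∃ z ∈ S, ∃ t : ℤ, x - y = 2 ^ t * z) :
    ∀ a ∈ S, ∃ q : ℚ, a = q * S.max' hne := by
  have hS : ∀ x ∈ S, ∀ y ∈ S, y < x → ∃ z ∈ S, ∃ q : ℚ, x - y = q * z := by
    intro x hx y hy hyx
    obtain ⟨z, hz, t, h⟩ := hcdts x hx y hy hyx
    exact ⟨z, hz, 2 ^ t, by rw [h, Rat.cast_zpow, Rat.cast_ofNat]⟩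
  exact fun a ha => exists_rat_eq_mul_of_sub_eq_rat_mul hpos hS ha (S.max'_mem hne)
end

section
/- Any scale (finite set of positive reals) containing two elements whose ratio is irrational is not a complete difference tone scale. -/
/-!
Irrationality of `x / y` yields a `ℚ`-linear map `f : ℝ → ℝ` with `f y = 0 ≠ f x`. Since `f` commutes
with multiplication by `2 ^ t`, completeness makes the ratio `f (a - b) / (a - b)` of every
difference one of the ratios `f z / z`, `z ∈ S`. But if `a` has the largest and `b` the smallest
ratio and these differ, then the ratio of `a - b` (or of `b - a`) falls strictly outside their range.
So `f s / s` is constant on the scale, contradicting `f x / x ≠ 0 = f y / y`.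
-/

def IsCompleteDifferenceToneScale (S : Finset ℝ) : Prop :=
  ∀ a ∈ S, ∀ b ∈ S, b < a → ∃ z ∈ S, ∃ t : ℤ, a - b = 2 ^ t * z

lemma exists_linearMap_apply_eq_zero_ne_zero_of_irrational_div {x y : ℝ}
    (h : Irrational (x / y)) : ∃ f : ℝ →ₗ[ℚ] ℝ, f y = 0 ∧ f x ≠ 0 := by
  have hy : y ≠ 0 := (div_ne_zero_iff.mp h.ne_zero).2
  have hx : x ∉ ℚ ∙ y := by
    intro hmem
    obtain ⟨q, rfl⟩ := Submodule.mem_span_singleton.mp hmem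
    exact h ⟨q, by rw [Rat.smul_def, mul_div_cancel_right₀ _ hy]⟩
  obtain ⟨f, hf, hfx⟩ := LinearMap.exists_extend_of_notMem 0 hx (1 : ℝ)
  exact ⟨f, congr($hf ⟨y, Submodule.mem_span_singleton_self y⟩), hfx ▸ one_ne_zero⟩

lemma div_lt_sub_div_sub_iff {a b p q : ℝ} (hb : 0 < b) (hba : b < a) :
    p / a < (p - q) / (a - b) ↔ q / b < p / a := by
  have ha : 0 < a := hb.trans hba
  rw [div_lt_div_iff₀ ha (sub_pos.mpr hba), div_lt_div_iff₀ hb ha]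
  constructor <;> intro h <;> nlinarith

lemma sub_div_sub_lt_div_iff {a b p q : ℝ} (hb : 0 < b) (hba : b < a) :
    (p - q) / (a - b) < p / a ↔ p / a < q / b := by
  have ha : 0 < a := hb.trans hba
  rw [div_lt_div_iff₀ (sub_pos.mpr hba) ha, div_lt_div_iff₀ ha hb]
  constructor <;> intro h <;> nlinarith

lemma div_eq_div_of_forall_sub_div_sub_mem {S : Finset ℝ} (hpos : ∀ s ∈ S, 0 < s) (g : ℝ → ℝ)
    (h : ∀ a ∈ S, ∀ b ∈ S, b < a → ∃ z ∈ S, (g a - g b) / (a - b) = g z / z) :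
    ∀ a ∈ S, ∀ b ∈ S, g a / a = g b / b := by
  intro u hu v hv
  obtain ⟨a, ha, hmax⟩ := S.exists_max_image (fun s ↦ g s / s) ⟨u, hu⟩
  obtain ⟨b, hb, hmin⟩ := S.exists_min_image (fun s ↦ g s / s) ⟨u, hu⟩
  suffices g a / a ≤ g b / b by
    linarith [hmax u hu, hmax v hv, hmin u hu, hmin v hv]
  by_contra! hlt
  rcases lt_trichotomy a b with hab | rfl | hba
  · obtain ⟨z, hz, hzeq⟩ := h b hb a ha hab
    have := (sub_div_sub_lt_div_iff (hpos a ha) hab).mpr hlt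
    rw [hzeq] at this
    exact (hmin z hz).not_gt this
  · exact hlt.false
  · obtain ⟨z, hz, hzeq⟩ := h a ha b hb hba
    have := (div_lt_sub_div_sub_iff (hpos b hb) hba).mpr hlt
    rw [hzeq] at this
    exact (hmax z hz).not_gt this

namespace IsCompleteDifferenceToneScale

variable {S : Finset ℝ}

lemma exists_sub_div_sub_eq (hS : IsCompleteDifferenceToneScale S) (f : ℝ →ₗ[ℚ] ℝ)
    {a b : ℝ} (ha : a ∈ S) (hb : b ∈ S) (hba : b < a) :
    ∃ z ∈ S, (f a - f b) / (a - b) = f z / z := by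
  obtain ⟨z, hz, t, hdiff⟩ := hS a ha b hb hba
  have hf : f (2 ^ t * z) = 2 ^ t * f z := by
    simpa [Rat.smul_def] using f.map_smul ((2 : ℚ) ^ t) z
  refine ⟨z, hz, ?_⟩
  rw [← map_sub, hdiff, hf, mul_div_mul_left _ _ (zpow_ne_zero t two_ne_zero)]

lemma div_eq_div (hS : IsCompleteDifferenceToneScale S) (hpos : ∀ s ∈ S, 0 < s)
    (f : ℝ →ₗ[ℚ] ℝ) : ∀ a ∈ S, ∀ b ∈ S, f a / a = f b / b :=
  div_eq_div_of_forall_sub_div_sub_mem hpos f fun _ ha _ hb hba ↦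
    hS.exists_sub_div_sub_eq f ha hb hba

end IsCompleteDifferenceToneScale

/-- A scale containing an irrational interval is not a complete difference
tone scale. -/
theorem irrational_interval_not_complete
    (S : Finset ℝ) (hpos : ∀ x ∈ S, 0 < x)
    (x y : ℝ) (hx : x ∈ S) (hy : y ∈ S) (hirr : Irrational (x / y)) :
    ¬ (∀ a ∈ S, ∀ b ∈ S, b < a → ∃ z ∈ S, ∃ t : ℤ, a - b = 2 ^ t * z) := by
  intro (hS : IsCompleteDifferenceToneScale S)
  obtain ⟨f, hfy, hfx⟩ := exists_linearMap_apply_eq_zero_ne_zero_of_irrational_div hirr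
  have hratio : f x / x = f y / y := hS.div_eq_div hpos f x hx y hy
  rw [hfy, zero_div] at hratio
  exact div_ne_zero hfx (hpos x hx).ne' hratio
end
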